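/- For the discrete Liouville equation, with Y_+ = (t-1)X_1 and Y_- = t X_{-1}, the u-shifted operators satisfy D(Y_+) = ((t_1-1)/t_1)(Y_+ - (t-1)\partial/\partial t) and D(Y_-) = (t_1/(t_1-1))(Y_- - t\,\partial/\partial t). -/

import Mathlib

/-! The `u`-shift of `x_j` is `x_{j+1}` with its first factor `t₁/(t₀-1)` removed, so
`Y₊_{j+1} = t₁ D(x_j)` while `D(Y₊)_{j+1} = (t₁-1) D(x_j)`; likewise `Y₋_{j+1} = (t₁-1) D(x_{-,j})`
and `D(Y₋)_{j+1} = t₁ D(x_{-,j})`. In degree `0` the pushforward vanishes, and subtracting the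
`∂/∂t` term cancels the constant coefficient of `Y₊` (resp. `Y₋`). -/

open Finset

/-- The `u`-shift acting on functions of the dynamical variables `t₀, t₁, t₂, …`. -/
noncomputable def uShift (F : (ℕ → ℝ) → ℝ) : (ℕ → ℝ) → ℝ := fun t => F (fun k => t (k+1))

/-- Coefficients of `X₁` for the discrete Liouville equation. -/
noncomputable def xplus (j : ℕ) : (ℕ → ℝ) → ℝ := fun t => ∏ k ∈ range j, t (k+1) / (t k - 1)

/-- Coefficients of `X₋₁` for the discrete Liouville equation. -/
noncomputable def xminus (j : ℕ) : (ℕ → ℝ) → ℝ := fun t => ∏ k ∈ range j, (t (k+1) - 1) / t k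

/-- Coefficients of `Y₊ = (t-1)X₁`. -/
noncomputable def Yplus (j : ℕ) : (ℕ → ℝ) → ℝ := fun t => (t 0 - 1) * xplus j t

/-- Coefficients of `Y₋ = t X₋₁`. -/
noncomputable def Yminus (j : ℕ) : (ℕ → ℝ) → ℝ := fun t => t 0 * xminus j t

/-- Pushforward of a vector field `Σ cⱼ ∂/∂tⱼ` under the `u`-shift `D`:
`D(X) = Σ D(cⱼ) ∂/∂t_{j+1}`. -/
noncomputable def pushD (c : ℕ → (ℕ → ℝ) → ℝ) : ℕ → (ℕ → ℝ) → ℝ :=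
  fun j => match j with
  | 0 => fun _ => 0
  | j + 1 => uShift (c j)

theorem xplus_succ (j : ℕ) (t : ℕ → ℝ) :
    xplus (j + 1) t = t 1 / (t 0 - 1) * uShift (xplus j) t := by
  rw [xplus, prod_range_succ', mul_comm]
  rfl

theorem xminus_succ (j : ℕ) (t : ℕ → ℝ) :
    xminus (j + 1) t = (t 1 - 1) / t 0 * uShift (xminus j) t := by
  rw [xminus, prod_range_succ', mul_comm]
  rfl

theorem pushD_zero (c : ℕ → (ℕ → ℝ) → ℝ) (t : ℕ → ℝ) : pushD c 0 t = 0 := rfl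

theorem pushD_succ (c : ℕ → (ℕ → ℝ) → ℝ) (j : ℕ) : pushD c (j + 1) = uShift (c j) := rfl

theorem pushD_Yplus_succ (t : ℕ → ℝ) (h0 : t 0 ≠ 1) (h1 : t 1 ≠ 0) (j : ℕ) :
    pushD Yplus (j + 1) t = (t 1 - 1) / t 1 * Yplus (j + 1) t := by
  have h0' : t 0 - 1 ≠ 0 := sub_ne_zero.mpr h0
  rw [pushD_succ, Yplus, xplus_succ]
  simp only [uShift, Yplus]
  field_simp

theorem pushD_Yminus_succ (t : ℕ → ℝ) (h0 : t 0 ≠ 0) (h1 : t 1 ≠ 1) (j : ℕ) :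
    pushD Yminus (j + 1) t = t 1 / (t 1 - 1) * Yminus (j + 1) t := by
  have h1' : t 1 - 1 ≠ 0 := sub_ne_zero.mpr h1
  rw [pushD_succ, Yminus, xminus_succ]
  simp only [uShift, Yminus]
  field_simp

/-- The coefficient sequence of `∂/∂t` is `δ_{j,0}`. -/
theorem stmt10 :
    ∀ t : ℕ → ℝ, (∀ k, t k ≠ 0 ∧ t k ≠ 1) → ∀ j : ℕ,
      pushD Yplus j t
        = ((t 1 - 1) / t 1) * (Yplus j t - (t 0 - 1) * (if j = 0 then 1 else 0)) ∧
      pushD Yminus j t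
        = (t 1 / (t 1 - 1)) * (Yminus j t - t 0 * (if j = 0 then 1 else 0)) := by
  intro t ht j
  cases j with
  | zero => simp [pushD_zero, Yplus, Yminus, xplus, xminus]
  | succ j =>
    simp only [Nat.succ_ne_zero, if_false, mul_zero, sub_zero]
    exact ⟨pushD_Yplus_succ t (ht 0).2 (ht 1).1 j, pushD_Yminus_succ t (ht 0).1 (ht 1).2 j⟩
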